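/- Let n be a positive integer with n ≡ 3 (mod 4) and let a be an indeterminate. Then, modulo Φ_n(q)², (aq²,q²/a;q⁴)_{(3n-1)/4} / (q⁴/a,aq⁴;q⁴)_{(3n-1)/4} ≡ q^{2n}·(1−a)(1−1/a)·(aq²,q²/a;q⁴)_{(n-1)/2}·(aq^{2n+4},q^{2n+4}/a;q⁴)_{(n-3)/4} / (q⁴/a,aq⁴;q⁴)_{(3n-1)/4}, as rational functions of q over ℚ(a). -/
import Mathlib

def qPoch {K : Type*} [Field K] (x q : K) (k : ℕ) : K :=
  ∏ i ∈ Finset.range k, (1 - x * q ^ i)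

abbrev Qa : Type := FractionRing (Polynomial ℚ)

noncomputable def A : RatFunc Qa :=
  RatFunc.C (algebraMap (Polynomial ℚ) Qa Polynomial.X)

noncomputable def a0 : Qa := algebraMap (Polynomial ℚ) Qa Polynomial.X

lemma a0_ne_zero : a0 ≠ 0 := by
  simp [a0, map_eq_zero_iff _ (IsFractionRing.injective (Polynomial ℚ) Qa), Polynomial.X_ne_zero]

lemma a0_pow_ne_one {n : ℕ} (hn : 0 < n) : a0 ^ n ≠ 1 := by
  intro h
  rw [a0, ← map_pow, ← map_one (algebraMap (Polynomial ℚ) Qa)] at h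
  have := IsFractionRing.injective (Polynomial ℚ) Qa h
  have := congrArg (Polynomial.eval 0) this
  simp [Polynomial.eval_pow, zero_pow hn.ne'] at this

noncomputable def P (c : Qa) (s k : ℕ) : Polynomial Qa :=
  ∏ i ∈ Finset.range k, (1 - Polynomial.C c * Polynomial.X ^ (s + 4 * i))

lemma qPoch_eq_map (c : Qa) (s k : ℕ) :
    qPoch (RatFunc.C c * RatFunc.X ^ s) (RatFunc.X ^ 4) k
      = algebraMap (Polynomial Qa) (RatFunc Qa) (P c s k) := by
  rw [qPoch, P, map_prod]
  refine Finset.prod_congr rfl fun i _ => ?_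
  rw [map_sub, map_one, map_mul, map_pow, RatFunc.algebraMap_C, RatFunc.algebraMap_X,
    pow_add, pow_mul, mul_assoc, ← pow_mul]

lemma P_add (c : Qa) (s k m : ℕ) : P c s (k + m) = P c s k * P c (s + 4 * k) m := by
  rw [P, Finset.prod_range_add]
  congr 1
  refine Finset.prod_congr rfl fun i _ => ?_
  have h : s + 4 * (k + i) = s + 4 * k + 4 * i := by ring
  rw [h]

lemma P_one (c : Qa) (s : ℕ) : P c s 1 = 1 - Polynomial.C c * Polynomial.X ^ s := by
  simp [P]

lemma P_split (c : Qa) (n t : ℕ) (h : n = 4 * t + 3) :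
    P c 2 ((2 * t + 1) + (1 + t))
      = P c 2 (2 * t + 1) * ((1 - Polynomial.C c * Polynomial.X ^ (2 * n)) * P c (2 * n + 4) t) := by
  rw [P_add c 2 (2 * t + 1) (1 + t), P_add c (2 + 4 * (2 * t + 1)) 1 t, P_one]
  have h1 : 2 + 4 * (2 * t + 1) = 2 * n := by omega
  rw [h1]

lemma coprime_cyclotomic_P {n : ℕ} {c : Qa} (hc : c ^ n ≠ 1) (s k : ℕ) :
    IsCoprime (Polynomial.cyclotomic n Qa) (P c s k) := by
  classical
  by_contra h
  rw [← EuclideanDomain.gcd_isUnit_iff] at h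
  set g := EuclideanDomain.gcd (Polynomial.cyclotomic n Qa) (P c s k) with hg
  have hg0 : g ≠ 0 := by
    intro h0
    rw [hg, EuclideanDomain.gcd_eq_zero_iff] at h0
    exact Polynomial.cyclotomic_ne_zero n Qa h0.1
  obtain ⟨p, hpirr, hpg⟩ := WfDvdMonoid.exists_irreducible_factor h hg0
  have hpΦ : p ∣ Polynomial.cyclotomic n Qa := hpg.trans (EuclideanDomain.gcd_dvd_left _ _)
  have hpD : p ∣ P c s k := hpg.trans (EuclideanDomain.gcd_dvd_right _ _)
  let I : Ideal (Polynomial Qa) := Ideal.span {p}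
  haveI : I.IsMaximal := PrincipalIdealRing.isMaximal_of_irreducible hpirr
  letI : Field (Polynomial Qa ⧸ I) := Ideal.Quotient.field I
  set π : Polynomial Qa →+* Polynomial Qa ⧸ I := Ideal.Quotient.mk I with hπ
  have hmem : ∀ q : Polynomial Qa, p ∣ q → π q = 0 := fun q hq =>
    Ideal.Quotient.eq_zero_iff_mem.2 (Ideal.mem_span_singleton.2 hq)
  have hxn : (π Polynomial.X) ^ n = 1 := by
    have : π (Polynomial.X ^ n - 1) = 0 :=
      hmem _ (hpΦ.trans (Polynomial.cyclotomic.dvd_X_pow_sub_one n Qa))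
    rw [map_sub, map_pow, map_one, sub_eq_zero] at this
    exact this
  have hD0 : π (P c s k) = 0 := hmem _ hpD
  rw [P, map_prod, Finset.prod_eq_zero_iff] at hD0
  obtain ⟨i, -, hi⟩ := hD0
  rw [map_sub, map_one, map_mul, map_pow, sub_eq_zero] at hi
  have hcn : π (Polynomial.C c) ^ n = 1 := by
    have := congrArg (· ^ n) hi.symm
    simp only [one_pow, mul_pow, ← pow_mul] at this
    rw [mul_comm (s + 4 * i) n, pow_mul, hxn, one_pow, mul_one] at this
    exact this
  have hinj : Function.Injective (π.comp Polynomial.C) := (π.comp Polynomial.C).injective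
  apply hc
  apply hinj
  rw [RingHom.comp_apply, RingHom.comp_apply, map_pow, map_one]
  exact hcn

theorem stmt_18 (n : ℕ) (hn : 0 < n) (h4 : n % 4 = 3) :
    (Polynomial.cyclotomic n Qa ^ 2) ∣
      ((qPoch (A * (RatFunc.X : RatFunc Qa) ^ 2) (RatFunc.X ^ 4) ((3 * n - 1) / 4) *
            qPoch ((RatFunc.X : RatFunc Qa) ^ 2 / A) (RatFunc.X ^ 4) ((3 * n - 1) / 4) /
          (qPoch ((RatFunc.X : RatFunc Qa) ^ 4 / A) (RatFunc.X ^ 4) ((3 * n - 1) / 4) *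
            qPoch (A * (RatFunc.X : RatFunc Qa) ^ 4) (RatFunc.X ^ 4) ((3 * n - 1) / 4))) -
        (RatFunc.X : RatFunc Qa) ^ (2 * n) * (1 - A) * (1 - 1 / A) *
          (qPoch (A * (RatFunc.X : RatFunc Qa) ^ 2) (RatFunc.X ^ 4) ((n - 1) / 2) *
            qPoch ((RatFunc.X : RatFunc Qa) ^ 2 / A) (RatFunc.X ^ 4) ((n - 1) / 2) *
            (qPoch (A * (RatFunc.X : RatFunc Qa) ^ (2 * n + 4)) (RatFunc.X ^ 4) ((n - 3) / 4) *
              qPoch ((RatFunc.X : RatFunc Qa) ^ (2 * n + 4) / A) (RatFunc.X ^ 4) ((n - 3) / 4)) /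
          (qPoch ((RatFunc.X : RatFunc Qa) ^ 4 / A) (RatFunc.X ^ 4) ((3 * n - 1) / 4) *
            qPoch (A * (RatFunc.X : RatFunc Qa) ^ 4) (RatFunc.X ^ 4) ((3 * n - 1) / 4)))).num := by
  classical
  obtain ⟨t, hnt⟩ : ∃ t, n = 4 * t + 3 := ⟨n / 4, by omega⟩
  have hA : A = RatFunc.C a0 := rfl
  have hdiv : ∀ s : ℕ, (RatFunc.X : RatFunc Qa) ^ s / RatFunc.C a0
      = RatFunc.C a0⁻¹ * RatFunc.X ^ s := fun s => by
    rw [div_eq_mul_inv, ← map_inv₀, mul_comm]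
  have e3 : (3 * n - 1) / 4 = (2 * t + 1) + (1 + t) := by omega
  have e2 : (n - 1) / 2 = 2 * t + 1 := by omega
  have e1 : (n - 3) / 4 = t := by omega
  rw [hA, e3, e2, e1]
  simp only [hdiv, qPoch_eq_map]
  have hcA : (1 : RatFunc Qa) - RatFunc.C a0
      = algebraMap (Polynomial Qa) (RatFunc Qa) (1 - Polynomial.C a0) := by
    rw [map_sub, map_one, RatFunc.algebraMap_C]
  have hcA' : (1 : RatFunc Qa) - 1 / RatFunc.C a0
      = algebraMap (Polynomial Qa) (RatFunc Qa) (1 - Polynomial.C a0⁻¹) := by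
    rw [map_sub, map_one, RatFunc.algebraMap_C, one_div, map_inv₀]
  have hX : (RatFunc.X : RatFunc Qa) ^ (2 * n)
      = algebraMap (Polynomial Qa) (RatFunc Qa) (Polynomial.X ^ (2 * n)) := by
    rw [map_pow, RatFunc.algebraMap_X]
  rw [hcA, hcA', hX]
  simp only [← map_mul]
  rw [mul_div_assoc', div_sub_div_same, ← map_mul, ← map_sub]
  -- now pure polynomial divisibility
  set N2 : Polynomial Qa := P a0 2 (2 * t + 1) * P a0⁻¹ 2 (2 * t + 1) *
      (P a0 (2 * n + 4) t * P a0⁻¹ (2 * n + 4) t) with hN2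
  have hu : Polynomial.C a0 * Polynomial.C a0⁻¹ = (1 : Polynomial Qa) := by
    rw [← map_mul, mul_inv_cancel₀ a0_ne_zero, map_one]
  have hE : P a0 2 ((2 * t + 1) + (1 + t)) * P a0⁻¹ 2 ((2 * t + 1) + (1 + t)) -
      Polynomial.X ^ (2 * n) * (1 - Polynomial.C a0) * (1 - Polynomial.C a0⁻¹) * N2
      = N2 * (1 - Polynomial.X ^ (2 * n)) ^ 2 := by
    rw [P_split a0 n t hnt, P_split a0⁻¹ n t hnt, hN2]
    linear_combination (P a0 2 (2 * t + 1) * P a0⁻¹ 2 (2 * t + 1) *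
      (P a0 (2 * n + 4) t * P a0⁻¹ (2 * n + 4) t) *
      ((Polynomial.X : Polynomial Qa) ^ (2 * n) * Polynomial.X ^ (2 * n)
        - Polynomial.X ^ (2 * n))) * hu
  set BIG : Polynomial Qa := P a0 2 (2 * t + 1 + (1 + t)) * P a0⁻¹ 2 (2 * t + 1 + (1 + t)) -
      Polynomial.X ^ (2 * n) * (1 - Polynomial.C a0) * (1 - Polynomial.C a0⁻¹) * N2 with hBIG
  set Dp : Polynomial Qa := P a0⁻¹ 4 (2 * t + 1 + (1 + t)) * P a0 4 (2 * t + 1 + (1 + t)) with hDp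
  have hΦ1 : Polynomial.cyclotomic n Qa ∣ (1 - Polynomial.X ^ (2 * n)) :=
    (Polynomial.cyclotomic.dvd_X_pow_sub_one n Qa).trans
      ⟨-((Polynomial.X : Polynomial Qa) ^ n + 1), by ring⟩
  have hΦBIG : Polynomial.cyclotomic n Qa ^ 2 ∣ BIG := by
    rw [hE]
    exact Dvd.dvd.mul_left (pow_dvd_pow_of_dvd hΦ1 2) N2
  have han : a0 ^ n ≠ 1 := a0_pow_ne_one hn
  have han' : a0⁻¹ ^ n ≠ 1 := by
    intro h
    exact han (by rwa [inv_pow, inv_eq_one] at h)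
  have hco : IsCoprime (Polynomial.cyclotomic n Qa) Dp :=
    (coprime_cyclotomic_P han' 4 _).mul_right (coprime_cyclotomic_P han 4 _)
  have hDp0 : Dp ≠ 0 := by
    have heval : Polynomial.eval 0 Dp = 1 := by
      simp [hDp, P, Polynomial.eval_prod]
    intro h0
    rw [h0] at heval
    simp at heval
  have inj := IsFractionRing.injective (Polynomial Qa) (RatFunc Qa)
  set r : RatFunc Qa := algebraMap (Polynomial Qa) (RatFunc Qa) BIG /
      algebraMap (Polynomial Qa) (RatFunc Qa) Dp with hr
  have h1 := RatFunc.num_div_denom r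
  rw [div_eq_div_iff ((map_ne_zero_iff _ inj).2 r.denom_ne_zero)
      ((map_ne_zero_iff _ inj).2 hDp0)] at h1
  have key : r.num * Dp = BIG * r.denom := inj (by
    rw [map_mul _ r.num Dp, map_mul _ BIG r.denom]; exact h1)
  have h2 : Polynomial.cyclotomic n Qa ^ 2 ∣ r.num * Dp := by
    rw [key]
    exact hΦBIG.mul_right _
  exact (hco.pow_left).dvd_of_dvd_mul_right h2
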